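/- arXiv:2504.09084 — 3 statements merged into one kernel-verified Lean document; each statement's English description precedes it below -/
import Mathlib

section
/- Let f₀ be a measure-preserving transformation of a probability space (X, μ), and let ω ∈ ℂ with |ω| = 1. Suppose a, b : X → ℂ are bounded measurable functions such that for every n ∈ ℤ there is a constant C with |b(x) − ωⁿ a(f₀ⁿ(x))| ≤ C/|n| for μ-a.e. x (for n ≠ 0). Then μ-a.e.: b(x) = ω·b(f₀(x)), a(x) = ω·a(f₀(x)), and a(x) = b(x). -/
/-!
Writing `Tₙ a = ωⁿ · (a ∘ f₀ⁿ)`, the hypothesis says `Tₙ a → b` uniformly off null sets, at rate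
`C/n`. Composing with `f₀` shifts the index by one, so `ω · (b ∘ f₀)` is the limit of the same
sequence, whence `b = ω · (b ∘ f₀)`. Iterating, `b = Tₙ b`, so `‖Tₙ (b - a)‖ = ‖(b - a) ∘ f₀ⁿ‖`
is at most `C/n` a.e.; since `f₀ⁿ` preserves `μ`, so is `‖b - a‖`, and `a = b`.
-/

open MeasureTheory Filter Topology

section Pointwise

variable {E : Type*} [SeminormedAddCommGroup E] {ι : Type*} {l : Filter ι}

theorem tendsto_of_eventually_norm_sub_le {u : ι → E} {z : E} {ε : ι → ℝ}
    (h : ∀ᶠ n in l, ‖z - u n‖ ≤ ε n) (hε : Tendsto ε l (𝓝 0)) : Tendsto u l (𝓝 z) :=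
  tendsto_iff_norm_sub_tendsto_zero.2 <|
    squeeze_zero_norm' (h.mono fun n hn => by rwa [norm_norm, norm_sub_rev]) hε

end Pointwise

namespace MeasureTheory

variable {X : Type*} [MeasurableSpace X] {μ : Measure X}

theorem ae_eventually_atTop_of_eventually_ae {p : ℕ → X → Prop}
    (h : ∀ᶠ n in atTop, ∀ᵐ x ∂μ, p n x) : ∀ᵐ x ∂μ, ∀ᶠ n in atTop, p n x := by
  obtain ⟨N, hN⟩ := eventually_atTop.1 h
  have hall : ∀ᵐ x ∂μ, ∀ n, N ≤ n → p n x := ae_all_iff.2 fun n =>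
    if hn : N ≤ n then (hN n hn).mono fun _ hx _ => hx
    else ae_of_all μ fun _ h => absurd h hn
  filter_upwards [hall] with x hx using eventually_atTop.2 ⟨N, hx⟩

theorem ae_tendsto_of_eventually_ae_norm_sub_le {E : Type*} [SeminormedAddCommGroup E]
    {u : ℕ → X → E} {b : X → E} {ε : ℕ → ℝ} (hε : Tendsto ε atTop (𝓝 0))
    (h : ∀ᶠ n in atTop, ∀ᵐ x ∂μ, ‖b x - u n x‖ ≤ ε n) :
    ∀ᵐ x ∂μ, Tendsto (fun n => u n x) atTop (𝓝 (b x)) := by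
  filter_upwards [ae_eventually_atTop_of_eventually_ae h] with x hx
  exact tendsto_of_eventually_norm_sub_le hx hε

theorem MeasurePreserving.ae_comp_iff {Y : Type*} [MeasurableSpace Y] {ν : Measure Y}
    {f : X → Y} (hf : MeasurePreserving f μ ν) (hfe : MeasurableEmbedding f) {p : Y → Prop} :
    (∀ᵐ x ∂μ, p (f x)) ↔ ∀ᵐ y ∂ν, p y := by
  rw [← hfe.ae_map_iff, hf.map_eq]

theorem MeasurePreserving.ae_comp_iterate_iff {e : X ≃ᵐ X} (he : MeasurePreserving e μ μ)
    {p : X → Prop} (n : ℕ) : (∀ᵐ x ∂μ, p (e^[n] x)) ↔ ∀ᵐ x ∂μ, p x := by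
  induction n with
  | zero => rfl
  | succ n ih =>
    simp only [Function.iterate_succ_apply]
    exact (he.ae_comp_iff e.measurableEmbedding (p := fun y => p (e^[n] y))).trans ih

variable {𝕜 : Type*} [NormedField 𝕜] {ω : 𝕜} {a b : X → 𝕜} {f : X → X}

theorem ae_eq_mul_comp_of_ae_tendsto (hf : Measure.QuasiMeasurePreserving f μ μ)
    (h : ∀ᵐ x ∂μ, Tendsto (fun n => ω ^ n * a (f^[n] x)) atTop (𝓝 (b x))) :
    ∀ᵐ x ∂μ, b x = ω * b (f x) := by
  filter_upwards [h, hf.ae h] with x hx hfx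
  have hshift : Tendsto (fun n => ω ^ (n + 1) * a (f^[n + 1] x)) atTop (𝓝 (ω * b (f x))) := by
    simpa only [pow_succ', mul_assoc, Function.iterate_succ_apply] using hfx.const_mul ω
  exact tendsto_nhds_unique ((tendsto_add_atTop_iff_nat 1).2 hx) hshift

theorem ae_eq_pow_mul_comp_iterate (hf : Measure.QuasiMeasurePreserving f μ μ)
    (h : ∀ᵐ x ∂μ, b x = ω * b (f x)) (n : ℕ) : ∀ᵐ x ∂μ, b x = ω ^ n * b (f^[n] x) := by
  induction n with
  | zero => simp
  | succ n ih =>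
    filter_upwards [ih, (hf.iterate n).ae h] with x hx hfx
    rw [hx, hfx, Function.iterate_succ_apply', pow_succ, mul_assoc]

theorem ae_eq_of_eventually_ae_norm_sub_le {e : X ≃ᵐ X} (he : MeasurePreserving e μ μ)
    (hω : ‖ω‖ = 1) {ε : ℕ → ℝ} (hε : Tendsto ε atTop (𝓝 0))
    (h : ∀ᶠ n in atTop, ∀ᵐ x ∂μ, ‖b x - ω ^ n * a (e^[n] x)‖ ≤ ε n)
    (hinv : ∀ᵐ x ∂μ, b x = ω * b (e x)) : ∀ᵐ x ∂μ, a x = b x := by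
  have hdiff : ∀ᶠ n in atTop, ∀ᵐ y ∂μ, ‖b y - a y‖ ≤ ε n := h.mono fun n hn =>
    (he.ae_comp_iterate_iff n).1 <| by
      filter_upwards [hn, ae_eq_pow_mul_comp_iterate he.quasiMeasurePreserving hinv n]
        with x hx hbx
      rwa [hbx, ← mul_sub, norm_mul, norm_pow, hω, one_pow, one_mul] at hx
  filter_upwards [ae_eventually_atTop_of_eventually_ae hdiff] with y hy
  exact tendsto_nhds_unique tendsto_const_nhds (tendsto_of_eventually_norm_sub_le hy hε)

end MeasureTheory

open MeasureTheory

theorem twisted_invariance_equation_general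
    {X : Type*} [MeasurableSpace X] (μ : Measure X)
    (e : X ≃ᵐ X) (he : MeasurePreserving e μ μ)
    (ω : ℂ) (hω : ‖ω‖ = 1)
    (a b : X → ℂ)
    (C : ℝ)
    (hasym : ∀ n : ℤ, n ≠ 0 →
      ∀ᵐ x ∂μ, ‖b x - ω ^ n * a ((e.toEquiv ^ n) x)‖ ≤ C / |(n : ℝ)|) :
    (∀ᵐ x ∂μ, b x = ω * b (e x)) ∧ (∀ᵐ x ∂μ, a x = ω * a (e x)) ∧
      (∀ᵐ x ∂μ, a x = b x) := by
  have hbound : ∀ᶠ n : ℕ in atTop, ∀ᵐ x ∂μ, ‖b x - ω ^ n * a (e^[n] x)‖ ≤ C / n := by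
    filter_upwards [eventually_ge_atTop 1] with n hn
    simpa [Equiv.Perm.coe_pow] using hasym n (by positivity)
  have hε := tendsto_const_div_atTop_nhds_zero_nat C
  have hb := ae_eq_mul_comp_of_ae_tendsto he.quasiMeasurePreserving
    (ae_tendsto_of_eventually_ae_norm_sub_le hε hbound)
  have hab := ae_eq_of_eventually_ae_norm_sub_le he hω hε hbound hb
  refine ⟨hb, ?_, hab⟩
  filter_upwards [hb, hab, he.quasiMeasurePreserving.ae hab] with x hbx habx habex
  rw [habx, habex, hbx]

/-- asymptotic twisted invariance equations.  If `b(x) = ωⁿ a(f₀ⁿ(x)) + O(1/|n|)`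
a.e. for all nonzero integers `n`, with `a, b` bounded measurable and `|ω| = 1`, then a.e.
`b = ω·(b ∘ f₀)`, `a = ω·(a ∘ f₀)` and `a = b`. -/
theorem twisted_invariance_equation
    {X : Type*} [MeasurableSpace X] (μ : Measure X) [IsProbabilityMeasure μ]
    (e : X ≃ᵐ X) (he : MeasurePreserving e μ μ)
    (ω : ℂ) (hω : ‖ω‖ = 1)
    (a b : X → ℂ) (ha : Measurable a) (hb : Measurable b)
    (Ca Cb : ℝ)
    (haB : ∀ᵐ x ∂μ, ‖a x‖ ≤ Ca)
    (hbB : ∀ᵐ x ∂μ, ‖b x‖ ≤ Cb)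
    (C : ℝ)
    (hasym : ∀ n : ℤ, n ≠ 0 →
      ∀ᵐ x ∂μ, ‖b x - ω ^ n * a ((e.toEquiv ^ n) x)‖ ≤ C / |(n : ℝ)|) :
    (∀ᵐ x ∂μ, b x = ω * b (e x)) ∧ (∀ᵐ x ∂μ, a x = ω * a (e x)) ∧
      (∀ᵐ x ∂μ, a x = b x) :=
  twisted_invariance_equation_general μ e he ω hω a b C hasym
end

section
/- Let G be a connected Lie group and A an automorphism of G such that 1 is not an eigenvalue of DA. Then for every a ∈ G the affine map f : G → G, f(g) = a·A(g), has a fixed point. -/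
/-!
Let `G` act on itself by twisted conjugation `g • x = g x A(g)⁻¹`. Since `a * A g = g` means
`a = g • 1`, it suffices that the orbit `S` of `1` is clopen. Normalise the orbit map of `x` to
`τₓ g = (g • x) x⁻¹`, which fixes `1`. Its differential at `1` is `id - DA` for `x = 1`, and
`τ_{h • 1} = c_h ∘ τ₁ ∘ c_h⁻¹`, so `det Dτₓ(1) = det (id - DA) ≠ 0` for `x ∈ S`; by continuity in
`x` this persists on the closure of `S`. There the inverse function theorem makes the orbit of `x`
a neighbourhood of `x`, so `S` is open and contains its closure points.
-/

open Manifold Filter Set Topology Function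

theorem map_extChartAt_symm_nhds_of_boundaryless {𝕜 E H M : Type*} [NontriviallyNormedField 𝕜]
    [NormedAddCommGroup E] [NormedSpace 𝕜 E] [TopologicalSpace H] [TopologicalSpace M]
    [ChartedSpace H M] (I : ModelWithCorners 𝕜 E H) [I.Boundaryless] (x : M) :
    map (extChartAt I x).symm (𝓝 (extChartAt I x x)) = 𝓝 x := by
  simpa only [I.range_eq_univ, nhdsWithin_univ] using
    map_extChartAt_symm_nhdsWithin_range (I := I) x

section InverseFunctionTheorem

variable {𝕜 : Type*} [RCLike 𝕜] {E F : Type*} [NormedAddCommGroup E] [NormedSpace 𝕜 E]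
  [NormedAddCommGroup F] [NormedSpace 𝕜 F]
  {M N : Type*} [TopologicalSpace M] [ChartedSpace E M] [TopologicalSpace N] [ChartedSpace F N]

theorem ContMDiffAt.map_nhds_eq_of_mfderiv_eq_equiv [CompleteSpace E] {n : WithTop ℕ∞}
    {f : M → N} {p : M} (hf : ContMDiffAt 𝓘(𝕜, E) 𝓘(𝕜, F) n f p) (hn : n ≠ 0) (Z : E ≃L[𝕜] F)
    (hZ : mfderiv 𝓘(𝕜, E) 𝓘(𝕜, F) f p = (Z : E →L[𝕜] F)) :
    map f (𝓝 p) = 𝓝 (f p) := by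
  have hF : HasStrictFDerivAt (writtenInExtChartAt 𝓘(𝕜, E) 𝓘(𝕜, F) p f) (Z : E →L[𝕜] F)
      (extChartAt 𝓘(𝕜, E) p p) := by
    have hchart := (contMDiffAt_iff.mp hf).2
    rw [modelWithCornersSelf_coe, range_id, contDiffWithinAt_univ] at hchart
    have hmf := (hf.mdifferentiableAt hn).mfderiv
    rw [hZ, modelWithCornersSelf_coe, range_id, fderivWithin_univ] at hmf
    rw [hmf]
    exact hchart.hasStrictFDerivAt hn
  have hloc : (extChartAt 𝓘(𝕜, F) (f p)).symm ∘ writtenInExtChartAt 𝓘(𝕜, E) 𝓘(𝕜, F) p f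
      =ᶠ[𝓝 (extChartAt 𝓘(𝕜, E) p p)] f ∘ (extChartAt 𝓘(𝕜, E) p).symm := by
    have hcont : Tendsto (f ∘ (extChartAt 𝓘(𝕜, E) p).symm) (𝓝 (extChartAt 𝓘(𝕜, E) p p))
        (𝓝 (f p)) :=
      hf.continuousAt.tendsto.comp <| by
        simpa only [extChartAt_to_inv] using (continuousAt_extChartAt_symm (I := 𝓘(𝕜, E)) p).tendsto
    filter_upwards [hcont (extChartAt_source_mem_nhds (I := 𝓘(𝕜, F)) (f p))] with y hy
    exact (extChartAt 𝓘(𝕜, F) (f p)).left_inv hy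
  rw [← map_extChartAt_symm_nhds_of_boundaryless 𝓘(𝕜, E) p, map_map, ← map_congr hloc,
    ← map_map, hF.map_nhds_eq_of_equiv]
  simpa [writtenInExtChartAt] using map_extChartAt_symm_nhds_of_boundaryless 𝓘(𝕜, F) (f p)

end InverseFunctionTheorem

section TwistedConj

variable {G : Type*} [Group G] (A : G →* G)

def twistedConj (g x : G) : G := g * x * (A g)⁻¹

theorem twistedConj_mul (g h x : G) :
    twistedConj A (g * h) x = twistedConj A g (twistedConj A h x) := by
  simp only [twistedConj, map_mul, mul_inv_rev]
  group

theorem twistedConj_inv_twistedConj (g x : G) : twistedConj A g⁻¹ (twistedConj A g x) = x := by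
  simp only [twistedConj, map_inv]
  group

theorem twistedConj_mem_range_iff {g x : G} :
    twistedConj A g x ∈ range (twistedConj A · 1) ↔ x ∈ range (twistedConj A · 1) := by
  constructor
  · rintro ⟨k, hk⟩
    refine ⟨g⁻¹ * k, ?_⟩
    simp only at hk ⊢
    rw [twistedConj_mul, hk, twistedConj_inv_twistedConj]
  · rintro ⟨k, rfl⟩
    exact ⟨g * k, twistedConj_mul A g k 1⟩

theorem twistedConj_twistedConj_one_mul_inv (h : G) :
    (fun g => twistedConj A g (twistedConj A h 1) * (twistedConj A h 1)⁻¹) =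
      (fun y => h * y * h⁻¹) ∘ (twistedConj A · 1) ∘ (fun y => h⁻¹ * y * h) := by
  funext g
  simp only [twistedConj, comp_apply, map_mul, map_inv]
  group

theorem isClopen_range_twistedConj_one [TopologicalSpace G]
    (h : ∀ x ∈ closure (range (twistedConj A · 1)), range (twistedConj A · x) ∈ 𝓝 x) :
    IsClopen (range (twistedConj A · 1)) := by
  refine ⟨isClosed_of_closure_subset fun x hx => ?_, isOpen_iff_mem_nhds.2 fun x hx => ?_⟩
  · obtain ⟨_, ⟨g, rfl⟩, hgx⟩ := mem_closure_iff_nhds.1 hx _ (h x hx)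
    exact (twistedConj_mem_range_iff A).1 hgx
  · refine mem_of_superset (h x (subset_closure hx)) ?_
    rintro _ ⟨g, rfl⟩
    exact (twistedConj_mem_range_iff A).2 hx

end TwistedConj

theorem det_id_sub_ne_zero {K V : Type*} [Field K] [AddCommGroup V] [Module K V]
    [FiniteDimensional K V] {f : V →ₗ[K] V} (hf : ∀ v, f v = v → v = 0) :
    LinearMap.det (LinearMap.id - f) ≠ 0 := by
  rw [Ne, LinearMap.det_eq_zero_iff_ker_ne_bot, not_not, LinearMap.ker_eq_bot']
  intro v hv
  exact hf v (sub_eq_zero.1 hv).symm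

section Determinant

variable {𝕜 : Type*} [NontriviallyNormedField 𝕜] {E : Type*} [NormedAddCommGroup E]
  [NormedSpace 𝕜 E]

theorem det_mfderiv_comp_comp_of_leftInverse {M : Type*} [TopologicalSpace M]
    [ChartedSpace E M] {φ f ψ : M → M} {p q : M} (hφψ : LeftInverse φ ψ) (hψp : ψ p = q)
    (hfq : f q = q) (hφ : MDifferentiableAt 𝓘(𝕜, E) 𝓘(𝕜, E) φ q)
    (hf : MDifferentiableAt 𝓘(𝕜, E) 𝓘(𝕜, E) f q) (hψ : MDifferentiableAt 𝓘(𝕜, E) 𝓘(𝕜, E) ψ p) :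
    (mfderiv 𝓘(𝕜, E) 𝓘(𝕜, E) (φ ∘ f ∘ ψ) p).det = (mfderiv 𝓘(𝕜, E) 𝓘(𝕜, E) f q).det := by
  subst hψp
  have hconj (a b c : E →L[𝕜] E) (h : a.comp c = ContinuousLinearMap.id 𝕜 E) :
      (a.comp (b.comp c)).det = b.det := by
    have := congrArg ContinuousLinearMap.det h
    simp only [ContinuousLinearMap.det, ContinuousLinearMap.toLinearMap_comp,
      ContinuousLinearMap.coe_id, LinearMap.det_comp, LinearMap.det_id] at this ⊢
    linear_combination (LinearMap.det (b : E →ₗ[𝕜] E)) * this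
  have hid : (mfderiv 𝓘(𝕜, E) 𝓘(𝕜, E) φ (ψ p)).comp (mfderiv 𝓘(𝕜, E) 𝓘(𝕜, E) ψ p) =
      ContinuousLinearMap.id 𝕜 E := by
    rw [← mfderiv_comp p hφ hψ, hφψ.comp_eq_id, mfderiv_id]
    rfl
  have hφf : MDifferentiableAt 𝓘(𝕜, E) 𝓘(𝕜, E) φ (f (ψ p)) := hfq.symm ▸ hφ
  rw [mfderiv_comp p hφf (hf.comp p hψ), mfderiv_comp p hf hψ, comp_apply, hfq]
  exact hconj _ _ _ hid

variable [CompleteSpace 𝕜] {H : Type*} [TopologicalSpace H] {I : ModelWithCorners 𝕜 E H}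
  {M : Type*} [TopologicalSpace M] [ChartedSpace H M] [IsManifold I 1 M]
  {E' : Type*} [NormedAddCommGroup E'] [NormedSpace 𝕜 E'] {H' : Type*} [TopologicalSpace H']
  {J : ModelWithCorners 𝕜 E' H'} {N : Type*} [TopologicalSpace N] [ChartedSpace H' N]
  [IsManifold J 1 N]

theorem ContMDiff.continuous_det_mfderiv_of_apply_eq {n : WithTop ℕ∞} {F : N → M → M}
    (hF : ContMDiff (J.prod I) I n (uncurry F)) (hn : 1 ≤ n) {p : M} (hp : ∀ x, F x p = p) :
    Continuous fun x => (mfderiv I I (F x) p).det := by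
  rw [continuous_iff_continuousAt]
  intro x₀
  have hc := ((hF (x₀, p)).mfderiv F (fun _ => p) contMDiffAt_const
    (m := 0) (by simpa using hn)).continuousAt
  refine (ContinuousLinearMap.continuous_det.continuousAt.comp hc).congr_of_eventuallyEq
    (Eventually.of_forall fun x => ?_)
  -- both base points are constantly `p`, so the coordinate changes are trivial
  have hid : (tangentBundleCore I M).coordChange (achart H p) (achart H p) p =
      ContinuousLinearMap.id 𝕜 E := by
    ext v
    exact (tangentBundleCore I M).coordChange_self _ _ (mem_achart_source H p) v
  have hcoord : inTangentCoordinates I I (fun _ => p) (fun x => F x p)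
      (fun x => mfderiv I I (F x) p) x₀ x = mfderiv I I (F x) p := by
    refine (inTangentCoordinates_eq (I := I) (I' := I) (fun _ => p) (fun x => F x p)
      (fun x => mfderiv I I (F x) p) (mem_chart_source H p) ?_).trans ?_
    · simp only [hp, mem_chart_source]
    · simp only [hp, hid, ContinuousLinearMap.id_comp]
      exact ContinuousLinearMap.comp_id _
  exact congrArg ContinuousLinearMap.det hcoord.symm

end Determinant

section LieGroup

variable {𝕜 : Type*} [NontriviallyNormedField 𝕜] {E : Type*} [NormedAddCommGroup E]
  [NormedSpace 𝕜 E] {G : Type*} [TopologicalSpace G] [ChartedSpace E G] [Group G]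
  {n : WithTop ℕ∞} [LieGroup 𝓘(𝕜, E) n G]

theorem hasMFDerivAt_mul_one_one (hn : n ≠ 0) :
    HasMFDerivAt (𝓘(𝕜, E).prod 𝓘(𝕜, E)) 𝓘(𝕜, E) (fun q : G × G => q.1 * q.2) (1, 1)
      (ContinuousLinearMap.fst 𝕜 E E + ContinuousLinearMap.snd 𝕜 E E) := by
  have hmul : MDifferentiableAt (𝓘(𝕜, E).prod 𝓘(𝕜, E)) 𝓘(𝕜, E) (fun q : G × G => q.1 * q.2)
      (1, 1) := (contMDiff_mul 𝓘(𝕜, E) n).mdifferentiableAt hn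
  have hderiv : mfderiv (𝓘(𝕜, E).prod 𝓘(𝕜, E)) 𝓘(𝕜, E) (fun q : G × G => q.1 * q.2) (1, 1) =
      ContinuousLinearMap.fst 𝕜 E E + ContinuousLinearMap.snd 𝕜 E E := by
    ext v
    rw [mfderiv_prod_eq_add_apply hmul, show (fun z : G => z * 1) = id from funext mul_one,
      show (fun z : G => 1 * z) = id from funext one_mul, mfderiv_id]
    rfl
  exact hderiv ▸ hmul.hasMFDerivAt

theorem HasMFDerivAt.mul_of_eq_one (hn : n ≠ 0) {f g : G → G} {p : G} {f' g' : E →L[𝕜] E}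
    (hf : HasMFDerivAt 𝓘(𝕜, E) 𝓘(𝕜, E) f p f') (hg : HasMFDerivAt 𝓘(𝕜, E) 𝓘(𝕜, E) g p g')
    (hf1 : f p = 1) (hg1 : g p = 1) :
    HasMFDerivAt 𝓘(𝕜, E) 𝓘(𝕜, E) (fun y => f y * g y) p (f' + g') := by
  have hmul : HasMFDerivAt (𝓘(𝕜, E).prod 𝓘(𝕜, E)) 𝓘(𝕜, E) (fun q : G × G => q.1 * q.2)
      (f p, g p) (ContinuousLinearMap.fst 𝕜 E E + ContinuousLinearMap.snd 𝕜 E E) := by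
    rw [hf1, hg1]
    exact hasMFDerivAt_mul_one_one hn
  have hsum : (ContinuousLinearMap.fst 𝕜 E E + ContinuousLinearMap.snd 𝕜 E E).comp (f'.prod g') =
      f' + g' := by
    ext v
    simp
  exact hsum ▸ hmul.comp p (hf.prodMk hg)

theorem hasMFDerivAt_inv_one (hn : n ≠ 0) :
    HasMFDerivAt 𝓘(𝕜, E) 𝓘(𝕜, E) (fun y : G => y⁻¹) 1 (-ContinuousLinearMap.id 𝕜 E) := by
  obtain ⟨L, hL⟩ : ∃ L : E →L[𝕜] E, HasMFDerivAt 𝓘(𝕜, E) 𝓘(𝕜, E) (fun y : G => y⁻¹) 1 L :=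
    ⟨_, ((contMDiff_inv 𝓘(𝕜, E) n).mdifferentiableAt hn).hasMFDerivAt⟩
  have hsum := (hasMFDerivAt_id (I := 𝓘(𝕜, E)) (1 : G)).mul_of_eq_one hn hL rfl inv_one
  rw [show (fun y : G => id y * y⁻¹) = fun _ => 1 from funext mul_inv_cancel] at hsum
  have hzero : ContinuousLinearMap.id 𝕜 E + L = 0 := hsum.mfderiv.symm.trans mfderiv_const
  rwa [← eq_neg_of_add_eq_zero_right hzero]

variable {A : G →* G}

theorem hasMFDerivAt_twistedConj_one (hn : n ≠ 0) {A' : E →L[𝕜] E}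
    (hA : HasMFDerivAt 𝓘(𝕜, E) 𝓘(𝕜, E) A 1 A') :
    HasMFDerivAt 𝓘(𝕜, E) 𝓘(𝕜, E) (twistedConj A · 1) 1 (ContinuousLinearMap.id 𝕜 E - A') := by
  have hinv : HasMFDerivAt 𝓘(𝕜, E) 𝓘(𝕜, E) (fun y : G => y⁻¹) (A 1)
      (-ContinuousLinearMap.id 𝕜 E) := (map_one A).symm ▸ hasMFDerivAt_inv_one hn
  have hsum := (hasMFDerivAt_id (I := 𝓘(𝕜, E)) (1 : G)).mul_of_eq_one hn (hinv.comp 1 hA) rfl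
    (by simp)
  have hdiff : ContinuousLinearMap.id 𝕜 E + (-ContinuousLinearMap.id 𝕜 E).comp A' =
      ContinuousLinearMap.id 𝕜 E - A' := by
    simp [sub_eq_add_neg]
  rw [show (twistedConj A · 1) = fun g => id g * ((fun y => y⁻¹) ∘ A) g by
    funext g; simp [twistedConj]]
  exact hdiff ▸ hsum

theorem det_mfderiv_twistedConj_mul_inv (hn : n ≠ 0) (hA : ContMDiff 𝓘(𝕜, E) 𝓘(𝕜, E) n A)
    (h : G) :
    (mfderiv 𝓘(𝕜, E) 𝓘(𝕜, E)
      (fun g => twistedConj A g (twistedConj A h 1) * (twistedConj A h 1)⁻¹) 1).det =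
      (mfderiv 𝓘(𝕜, E) 𝓘(𝕜, E) (twistedConj A · 1) 1).det := by
  have hconj (k l : G) : ContMDiff 𝓘(𝕜, E) 𝓘(𝕜, E) n (fun y : G => k * y * l) :=
    (contMDiff_const.mul contMDiff_id).mul contMDiff_const
  have hτ : ContMDiff 𝓘(𝕜, E) 𝓘(𝕜, E) n (twistedConj A · 1) :=
    (contMDiff_id.mul contMDiff_const).mul hA.inv
  rw [twistedConj_twistedConj_one_mul_inv]
  exact det_mfderiv_comp_comp_of_leftInverse (fun y => by group) (by group)
    (by simp [twistedConj]) ((hconj h h⁻¹).mdifferentiableAt hn) (hτ.mdifferentiableAt hn)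
    ((hconj h⁻¹ h).mdifferentiableAt hn)

theorem continuous_det_mfderiv_twistedConj_mul_inv [CompleteSpace 𝕜] (hn : 1 ≤ n)
    (hA : ContMDiff 𝓘(𝕜, E) 𝓘(𝕜, E) n A) :
    Continuous fun x => (mfderiv 𝓘(𝕜, E) 𝓘(𝕜, E) (fun g => twistedConj A g x * x⁻¹) 1).det := by
  have := IsManifold.of_le (I := 𝓘(𝕜, E)) (M := G) hn
  exact ContMDiff.continuous_det_mfderiv_of_apply_eq (F := fun x g => twistedConj A g x * x⁻¹)
    (((contMDiff_snd.mul contMDiff_fst).mul (hA.comp contMDiff_snd).inv).mul contMDiff_fst.inv)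
    hn (fun x => by simp [twistedConj])

end LieGroup

section RCLike

variable {𝕜 : Type*} [RCLike 𝕜] {E : Type*} [NormedAddCommGroup E] [NormedSpace 𝕜 E]
  {G : Type*} [TopologicalSpace G] [ChartedSpace E G] [Group G] {n : WithTop ℕ∞}
  [LieGroup 𝓘(𝕜, E) n G] {A : G →* G}

theorem range_twistedConj_mem_nhds [FiniteDimensional 𝕜 E] (hn : n ≠ 0)
    (hA : ContMDiff 𝓘(𝕜, E) 𝓘(𝕜, E) n A) {x : G}
    (hx : (mfderiv 𝓘(𝕜, E) 𝓘(𝕜, E) (fun g => twistedConj A g x * x⁻¹) 1).det ≠ 0) :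
    range (twistedConj A · x) ∈ 𝓝 x := by
  have := FiniteDimensional.complete 𝕜 E
  have := topologicalGroup_of_lieGroup 𝓘(𝕜, E) n (G := G)
  have hτ : ContMDiff 𝓘(𝕜, E) 𝓘(𝕜, E) n (fun g => twistedConj A g x * x⁻¹) :=
    ((contMDiff_id.mul contMDiff_const).mul hA.inv).mul contMDiff_const
  obtain ⟨L, hL⟩ : ∃ L : E →L[𝕜] E,
      mfderiv 𝓘(𝕜, E) 𝓘(𝕜, E) (fun g => twistedConj A g x * x⁻¹) 1 = L := ⟨_, rfl⟩
  rw [hL] at hx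
  have hmap := (hτ 1).map_nhds_eq_of_mfderiv_eq_equiv hn
    (LinearMap.equivOfDetNeZero (L : E →ₗ[𝕜] E) hx).toContinuousLinearEquiv hL
  rw [show twistedConj A 1 x * x⁻¹ = 1 by simp [twistedConj]] at hmap
  have hright : map (· * x) (𝓝 (1 : G)) = 𝓝 x := by simp
  rw [← hright, ← hmap, map_map]
  convert range_mem_map using 2
  funext g
  simp [twistedConj]

theorem range_twistedConj_one_eq_univ [FiniteDimensional 𝕜 E] [ConnectedSpace G] (hn : 1 ≤ n)
    (hA : ContMDiff 𝓘(𝕜, E) 𝓘(𝕜, E) n A) {A' : E →L[𝕜] E}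
    (hA' : HasMFDerivAt 𝓘(𝕜, E) 𝓘(𝕜, E) A 1 A') (hfix : ∀ v, A' v = v → v = 0) :
    range (twistedConj A · 1) = univ := by
  have hn₀ : n ≠ 0 := (lt_of_lt_of_le zero_lt_one hn).ne'
  have hdet : (mfderiv 𝓘(𝕜, E) 𝓘(𝕜, E) (twistedConj A · 1) 1).det ≠ 0 := by
    rw [(hasMFDerivAt_twistedConj_one hn₀ hA').mfderiv]
    exact det_id_sub_ne_zero (f := (A' : E →ₗ[𝕜] E)) hfix
  have hdetS : ∀ x ∈ range (twistedConj A · 1),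
      (mfderiv 𝓘(𝕜, E) 𝓘(𝕜, E) (fun g => twistedConj A g x * x⁻¹) 1).det =
        (mfderiv 𝓘(𝕜, E) 𝓘(𝕜, E) (twistedConj A · 1) 1).det := by
    rintro _ ⟨h, rfl⟩
    exact det_mfderiv_twistedConj_mul_inv hn₀ hA h
  refine (isClopen_range_twistedConj_one A fun x hx =>
    range_twistedConj_mem_nhds hn₀ hA ?_).eq_univ ⟨1, 1, by simp [twistedConj]⟩
  rwa [closure_minimal hdetS
    (isClosed_eq (continuous_det_mfderiv_twistedConj_mul_inv hn hA) continuous_const) hx]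

end RCLike

theorem affine_map_has_fixed_point_of_no_eigenvalue_one_general
    {E : Type*} [NormedAddCommGroup E] [NormedSpace ℝ E] [FiniteDimensional ℝ E]
    {G : Type*} [TopologicalSpace G] [ChartedSpace E G] [Group G]
    [LieGroup 𝓘(ℝ, E) (⊤ : ℕ∞) G] [ConnectedSpace G]
    (A : G ≃* G)
    (hA : ContMDiff 𝓘(ℝ, E) 𝓘(ℝ, E) (⊤ : ℕ∞) ⇑A)
    (hDA : ∀ v : E, mfderiv 𝓘(ℝ, E) 𝓘(ℝ, E) (⇑A) (1 : G) v = v → v = 0)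
    (a : G) :
    ∃ g : G, a * A g = g := by
  obtain ⟨A', hA'⟩ : ∃ A' : E →L[ℝ] E, HasMFDerivAt 𝓘(ℝ, E) 𝓘(ℝ, E) A 1 A' :=
    ⟨_, ((hA 1).mdifferentiableAt (by simp)).hasMFDerivAt⟩
  obtain ⟨g, hg⟩ := eq_univ_iff_forall.1 (range_twistedConj_one_eq_univ (A := A.toMonoidHom)
    (by simp) hA hA' fun v hv => hDA v (hA'.mfderiv ▸ hv)) a
  exact ⟨g, by rw [← hg]; simp [twistedConj]⟩

/-- if `G` is a connected Lie group and `A` an automorphism whose derivative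
at the identity does not have `1` as an eigenvalue, then every affine map `g ↦ a·A(g)` has
a fixed point. -/
theorem affine_map_has_fixed_point_of_no_eigenvalue_one
    {E : Type*} [NormedAddCommGroup E] [NormedSpace ℝ E] [FiniteDimensional ℝ E]
    {G : Type*} [TopologicalSpace G] [ChartedSpace E G] [Group G]
    [LieGroup 𝓘(ℝ, E) (⊤ : ℕ∞) G] [ConnectedSpace G]
    (A : G ≃* G)
    (hA : ContMDiff 𝓘(ℝ, E) 𝓘(ℝ, E) (⊤ : ℕ∞) ⇑A)
    (hA' : ContMDiff 𝓘(ℝ, E) 𝓘(ℝ, E) (⊤ : ℕ∞) ⇑A.symm)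
    (hDA : ∀ v : E, mfderiv 𝓘(ℝ, E) 𝓘(ℝ, E) (⇑A) (1 : G) v = v → v = 0)
    (a : G) :
    ∃ g : G, a * A g = g :=
  affine_map_has_fixed_point_of_no_eigenvalue_one_general A hA hDA a
end

section
/- Let G be a topological group and H₂ ⊆ H₁ ⊆ G closed subgroups. Then G/H₂ is compact if and only if both H₁/H₂ and G/H₁ are compact. -/
/-!
In a locally compact group, `G ⧸ N` is compact iff some compact `K ⊆ G` meets every coset of `N`:
the quotient map is open, so finitely many interiors of compact neighbourhoods already cover
the compact quotient. Such sets behave well in a tower `H₂ ≤ H₁`: if a compact `K` meets every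
`H₂`-coset, then `K ∩ H₁` (compact, as `H₁` is closed) meets every `H₂`-coset inside `H₁`,
while `G ⧸ H₁` is a continuous image of `G ⧸ H₂`; conversely, if `K` meets the `H₁`-cosets
in `G` and `L` the `H₂`-cosets in `H₁`, then the compact set `K * L` meets every `H₂`-coset.
-/

open Set Pointwise QuotientGroup

theorem IsOpenMap.exists_isCompact_image_superset {X Y : Type*} [TopologicalSpace X]
    [TopologicalSpace Y] [WeaklyLocallyCompactSpace X] {f : X → Y} (hf : IsOpenMap f)
    {L : Set Y} (hL : IsCompact L) (hLf : L ⊆ range f) :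
    ∃ K : Set X, IsCompact K ∧ L ⊆ f '' K := by
  choose C hCc hCx using fun x : X => exists_compact_mem_nhds x
  obtain ⟨t, ht⟩ := hL.elim_finite_subcover (fun x => f '' interior (C x))
    (fun x => hf _ isOpen_interior) fun y hy => by
      obtain ⟨x, rfl⟩ := hLf hy
      exact mem_iUnion.2 ⟨x, mem_image_of_mem f (mem_interior_iff_mem_nhds.2 (hCx x))⟩
  refine ⟨⋃ x ∈ t, C x, t.finite_toSet.isCompact_biUnion fun x _ => hCc x, ht.trans ?_⟩
  exact iUnion₂_subset fun x hx =>
    image_mono (interior_subset.trans (subset_biUnion_of_mem (u := C) hx))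

namespace QuotientGroup

variable {G : Type*} [Group G]

theorem image_mk_preimage_val_eq_univ {H₁ H₂ : Subgroup G} (h : H₂ ≤ H₁) {K : Set G}
    (hK : (mk : G → G ⧸ H₂) '' K = univ) :
    (mk : H₁ → H₁ ⧸ H₂.subgroupOf H₁) '' (Subtype.val ⁻¹' K) = univ := by
  refine eq_univ_of_forall fun x => ?_
  obtain ⟨g, rfl⟩ := mk_surjective x
  obtain ⟨k, hk, hkg⟩ := hK.symm ▸ mem_univ (g : G ⧸ H₂)
  have hkg : k⁻¹ * g ∈ H₂ := QuotientGroup.eq.mp hkg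
  have hk₁ : k ∈ H₁ := by simpa using H₁.mul_mem g.2 (H₁.inv_mem (h hkg))
  exact ⟨⟨k, hk₁⟩, hk, QuotientGroup.eq.mpr (Subgroup.mem_subgroupOf.mpr hkg)⟩

theorem image_mk_mul_image_val_eq_univ {H₁ H₂ : Subgroup G} {K : Set G} {L : Set H₁}
    (hK : (mk : G → G ⧸ H₁) '' K = univ)
    (hL : (mk : H₁ → H₁ ⧸ H₂.subgroupOf H₁) '' L = univ) :
    (mk : G → G ⧸ H₂) '' (K * Subtype.val '' L) = univ := by
  refine eq_univ_of_forall fun x => ?_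
  obtain ⟨g, rfl⟩ := mk_surjective x
  obtain ⟨k, hk, hkg⟩ := hK.symm ▸ mem_univ (g : G ⧸ H₁)
  obtain ⟨l, hl, hlg⟩ :=
    hL.symm ▸ mem_univ (mk ⟨k⁻¹ * g, QuotientGroup.eq.mp hkg⟩ : H₁ ⧸ H₂.subgroupOf H₁)
  refine ⟨k * l, mul_mem_mul hk (mem_image_of_mem _ hl), QuotientGroup.eq.mpr ?_⟩
  simpa [mul_assoc] using Subgroup.mem_subgroupOf.mp (QuotientGroup.eq.mp hlg)

variable [TopologicalSpace G]

theorem compactSpace_of_le {H₁ H₂ : Subgroup G} (h : H₂ ≤ H₁) [CompactSpace (G ⧸ H₂)] :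
    CompactSpace (G ⧸ H₁) :=
  Function.Surjective.compactSpace (f := Subgroup.quotientMapOfLE h)
    (continuous_id.quotient_map' _) fun x => by
      obtain ⟨g, rfl⟩ := mk_surjective x
      exact ⟨g, rfl⟩

variable [SeparatelyContinuousMul G]

theorem compactSpace_iff_exists_isCompact_image_mk_eq_univ [WeaklyLocallyCompactSpace G]
    (N : Subgroup G) :
    CompactSpace (G ⧸ N) ↔ ∃ K : Set G, IsCompact K ∧ (mk : G → G ⧸ N) '' K = univ := by
  refine ⟨fun _ => ?_, fun ⟨K, hKc, hK⟩ => ⟨hK ▸ hKc.image continuous_mk⟩⟩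
  obtain ⟨K, hKc, hK⟩ := (isOpenMap_coe (N := N)).exists_isCompact_image_superset isCompact_univ
    (range_eq_univ.mpr mk_surjective).ge
  exact ⟨K, hKc, univ_subset_iff.mp hK⟩

end QuotientGroup

theorem cocompact_tower_general
    {G : Type*} [Group G] [TopologicalSpace G] [IsTopologicalGroup G]
    [LocallyCompactSpace G]
    (H₁ H₂ : Subgroup G) (h21 : H₂ ≤ H₁)
    (h1c : IsClosed (H₁ : Set G)) :
    CompactSpace (G ⧸ H₂) ↔
      (CompactSpace (H₁ ⧸ H₂.subgroupOf H₁) ∧ CompactSpace (G ⧸ H₁)) := by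
  have : LocallyCompactSpace H₁ := h1c.locallyCompactSpace
  constructor
  · intro hG
    obtain ⟨K, hKc, hK⟩ := (compactSpace_iff_exists_isCompact_image_mk_eq_univ H₂).mp hG
    refine ⟨(compactSpace_iff_exists_isCompact_image_mk_eq_univ _).mpr ?_, compactSpace_of_le h21⟩
    exact ⟨_, h1c.isClosedEmbedding_subtypeVal.isCompact_preimage hKc,
      image_mk_preimage_val_eq_univ h21 hK⟩
  · rintro ⟨hA, hB⟩
    obtain ⟨L, hLc, hL⟩ := (compactSpace_iff_exists_isCompact_image_mk_eq_univ _).mp hA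
    obtain ⟨K, hKc, hK⟩ := (compactSpace_iff_exists_isCompact_image_mk_eq_univ H₁).mp hB
    exact (compactSpace_iff_exists_isCompact_image_mk_eq_univ H₂).mpr
      ⟨_, hKc.mul (hLc.image continuous_subtype_val), image_mk_mul_image_val_eq_univ hK hL⟩

/-- for closed subgroups `H₂ ⊆ H₁` of a locally compact Hausdorff topological
group `G`, the coset space `G/H₂` is compact iff both `H₁/H₂` and `G/H₁` are compact. -/
theorem cocompact_tower
    {G : Type*} [Group G] [TopologicalSpace G] [IsTopologicalGroup G]
    [LocallyCompactSpace G] [T2Space G]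
    (H₁ H₂ : Subgroup G) (h21 : H₂ ≤ H₁)
    (h1c : IsClosed (H₁ : Set G)) (h2c : IsClosed (H₂ : Set G)) :
    CompactSpace (G ⧸ H₂) ↔
      (CompactSpace (H₁ ⧸ H₂.subgroupOf H₁) ∧ CompactSpace (G ⧸ H₁)) :=
  cocompact_tower_general H₁ H₂ h21 h1c
end
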